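/- For θ ∈ [0, π/2], the eight states ρ_x (x ∈ {0,1}³) defined by Bloch vectors ((−1)^{x₁} sin θ/√2, (−1)^{x₂} sin θ/√2, (−1)^{x₃} cos θ) satisfy the parity-obliviousness equivalence: for every parity string t ∈ {0,1}³ with at least two nonzero entries, (1/4) ∑_{x : x·t = 0 mod 2} ρ_x = (1/4) ∑_{x : x·t = 1 mod 2} ρ_x = I/2. -/
import Mathlib


open Matrix Finset

noncomputable section

def pauliX : Matrix (Fin 2) (Fin 2) ℂ := !![0, 1; 1, 0]
def pauliY : Matrix (Fin 2) (Fin 2) ℂ := !![0, -Complex.I; Complex.I, 0]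
def pauliZ : Matrix (Fin 2) (Fin 2) ℂ := !![1, 0; 0, -1]

def bsign (b : Bool) : ℝ := if b then -1 else 1

def pomState (x : Fin 3 → Bool) (θ : ℝ) : Matrix (Fin 2) (Fin 2) ℂ :=
  (1 / 2 : ℂ) •
    ((1 : Matrix (Fin 2) (Fin 2) ℂ)
      + ((bsign (x 0) / Real.sqrt 2 * Real.sin θ : ℝ) : ℂ) • pauliX
      + ((bsign (x 1) / Real.sqrt 2 * Real.sin θ : ℝ) : ℂ) • pauliY
      + ((bsign (x 2) * Real.cos θ : ℝ) : ℂ) • pauliZ)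

/-- The inner product `x·t = ∑ᵢ xᵢtᵢ` (as a count of common `true` positions). -/
def bdot (x t : Fin 3 → Bool) : ℕ := (Finset.univ.filter fun i => x i ∧ t i).card

lemma sum4 (θ : ℝ) (a b c d : Fin 3 → Bool)
    (h : ∀ k, bsign (a k) + bsign (b k) + bsign (c k) + bsign (d k) = 0) :
    pomState a θ + pomState b θ + pomState c θ + pomState d θ = (2 : ℂ) • 1 := by
  have h' : ∀ k, ((bsign (a k) : ℂ)) + bsign (b k) + bsign (c k) + bsign (d k) = 0 := by
    intro k; exact_mod_cast congrArg (Complex.ofReal) (h k)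
  ext i j
  fin_cases i <;> fin_cases j <;>
    simp [pomState, pauliX, pauliY, pauliZ, Matrix.one_apply] <;>
    first
      | linear_combination (Complex.cos θ)/2 * h' 2
      | linear_combination (-Complex.cos θ)/2 * h' 2
      | linear_combination (Complex.sin θ * ((Real.sqrt 2 : ℂ))⁻¹)/2 * h' 0 -
          Complex.I * (Complex.sin θ * ((Real.sqrt 2 : ℂ))⁻¹)/2 * h' 1
      | linear_combination (Complex.sin θ * ((Real.sqrt 2 : ℂ))⁻¹)/2 * h' 0 +
          Complex.I * (Complex.sin θ * ((Real.sqrt 2 : ℂ))⁻¹)/2 * h' 1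

lemma mix (θ : ℝ) (p : (Fin 3 → Bool) → Prop) [DecidablePred p]
    (a b c d : Fin 3 → Bool)
    (hset : Finset.univ.filter p = {a, b, c, d})
    (ha : a ∉ ({b, c, d} : Finset (Fin 3 → Bool)))
    (hb : b ∉ ({c, d} : Finset (Fin 3 → Bool)))
    (hc : c ∉ ({d} : Finset (Fin 3 → Bool)))
    (h : ∀ k, bsign (a k) + bsign (b k) + bsign (c k) + bsign (d k) = 0) :
    (1 / 4 : ℂ) • ∑ x ∈ Finset.univ.filter p, pomState x θ
      = (1 / 2 : ℂ) • (1 : Matrix (Fin 2) (Fin 2) ℂ) := by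
  rw [hset, Finset.sum_insert ha, Finset.sum_insert hb, Finset.sum_insert hc,
    Finset.sum_singleton, ← add_assoc, ← add_assoc, sum4 θ a b c d h, smul_smul]
  norm_num

/-- Parity-obliviousness: for every parity string `t` with at least two nonzero
entries, the uniform mixture of states with `x·t` even equals the uniform mixture
of states with `x·t` odd, both being the maximally mixed state `I/2`. -/
theorem pomState_parityOblivious (θ : ℝ) (hθ : θ ∈ Set.Icc 0 (Real.pi / 2))
    (t : Fin 3 → Bool) (ht : 2 ≤ (Finset.univ.filter fun i => t i).card) :
    (1 / 4 : ℂ) • ∑ x ∈ Finset.univ.filter fun x : Fin 3 → Bool => bdot x t % 2 = 0,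
        pomState x θ = (1 / 2 : ℂ) • (1 : Matrix (Fin 2) (Fin 2) ℂ) ∧
    (1 / 4 : ℂ) • ∑ x ∈ Finset.univ.filter fun x : Fin 3 → Bool => bdot x t % 2 = 1,
        pomState x θ = (1 / 2 : ℂ) • (1 : Matrix (Fin 2) (Fin 2) ℂ) := by
  have ht3 : t = ![t 0, t 1, t 2] := by funext i; fin_cases i <;> rfl
  cases h0 : t 0 <;> cases h1 : t 1 <;> cases h2 : t 2 <;> rw [h0, h1, h2] at ht3 <;> subst ht3
  · exact absurd ht (by decide)
  · exact absurd ht (by decide)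
  · exact absurd ht (by decide)
  · exact ⟨mix θ _ (![false, false, false] : Fin 3 → Bool) (![false, true, true] : Fin 3 → Bool) (![true, false, false] : Fin 3 → Bool) (![true, true, true] : Fin 3 → Bool) (by decide) (by decide) (by decide) (by decide)
        (by intro k; fin_cases k <;> norm_num [bsign]),
      mix θ _ (![false, false, true] : Fin 3 → Bool) (![false, true, false] : Fin 3 → Bool) (![true, false, true] : Fin 3 → Bool) (![true, true, false] : Fin 3 → Bool) (by decide) (by decide) (by decide) (by decide)
        (by intro k; fin_cases k <;> norm_num [bsign])⟩
  · exact absurd ht (by decide)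
  · exact ⟨mix θ _ (![false, false, false] : Fin 3 → Bool) (![false, true, false] : Fin 3 → Bool) (![true, false, true] : Fin 3 → Bool) (![true, true, true] : Fin 3 → Bool) (by decide) (by decide) (by decide) (by decide)
        (by intro k; fin_cases k <;> norm_num [bsign]),
      mix θ _ (![false, false, true] : Fin 3 → Bool) (![false, true, true] : Fin 3 → Bool) (![true, false, false] : Fin 3 → Bool) (![true, true, false] : Fin 3 → Bool) (by decide) (by decide) (by decide) (by decide)
        (by intro k; fin_cases k <;> norm_num [bsign])⟩
  · exact ⟨mix θ _ (![false, false, false] : Fin 3 → Bool) (![false, false, true] : Fin 3 → Bool) (![true, true, false] : Fin 3 → Bool) (![true, true, true] : Fin 3 → Bool) (by decide) (by decide) (by decide) (by decide)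
        (by intro k; fin_cases k <;> norm_num [bsign]),
      mix θ _ (![false, true, false] : Fin 3 → Bool) (![false, true, true] : Fin 3 → Bool) (![true, false, false] : Fin 3 → Bool) (![true, false, true] : Fin 3 → Bool) (by decide) (by decide) (by decide) (by decide)
        (by intro k; fin_cases k <;> norm_num [bsign])⟩
  · exact ⟨mix θ _ (![false, false, false] : Fin 3 → Bool) (![false, true, true] : Fin 3 → Bool) (![true, false, true] : Fin 3 → Bool) (![true, true, false] : Fin 3 → Bool) (by decide) (by decide) (by decide) (by decide)
        (by intro k; fin_cases k <;> norm_num [bsign]),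
      mix θ _ (![false, false, true] : Fin 3 → Bool) (![false, true, false] : Fin 3 → Bool) (![true, false, false] : Fin 3 → Bool) (![true, true, true] : Fin 3 → Bool) (by decide) (by decide) (by decide) (by decide)
        (by intro k; fin_cases k <;> norm_num [bsign])⟩

end
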